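/- Let $q$ be a bounded Radon measure on the half-plane $\mathbb{H} = \{x_2 > 0\}$, let $\alpha > 0$, and define $g(x_1) = -2\int_{\mathbb{H}} \partial_2 H_\alpha(x_1 - y_1, y_2)\,dq(y)$, where $H_\alpha = \alpha G_\alpha + \frac{1}{2\pi}\ln|\cdot|$. Then $g \in L^1(\mathbb{R})$ and $\|g\|_{L^1(\mathbb{R})} \leq \|q\|_{\mathcal{BM}(\mathbb{H})}$. -/

import Mathlib

open MeasureTheory Real

noncomputable def besselG (α : ℝ) (x : ℝ × ℝ) : ℝ :=
  (1 / (4 * π * α)) * ∫ t in Set.Ioi (0 : ℝ),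
    (1 / t) * Real.exp (-(π * (x.1 ^ 2 + x.2 ^ 2)) / (t * α)) * Real.exp (-t / (4 * π))

noncomputable def d2G (α : ℝ) (x : ℝ × ℝ) : ℝ :=
  deriv (fun y => besselG α (x.1, y)) x.2

noncomputable def Hfun (α : ℝ) (x : ℝ × ℝ) : ℝ :=
  α * besselG α x + (1 / (2 * π)) * Real.log (Real.sqrt (x.1 ^ 2 + x.2 ^ 2))

noncomputable def d2H (α : ℝ) (x : ℝ × ℝ) : ℝ :=
  deriv (fun y => Hfun α (x.1, y)) x.2

/-!
Differentiating the integral representation of `Gα` under the integral sign gives, for `x₂ > 0`,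
`∂₂Hα(x) = x₂ / (2π|x|²) - (x₂ / 2α) ∫₀^∞ t⁻² e^{-π|x|²/(αt)} e^{-t/4π} dt`, and after the
substitution `t ↦ 1/t` the integral is at most `∫₀^∞ e^{-π|x|² s/α} ds = α / (π|x|²)`.
Hence `0 ≤ ∂₂Hα(x₁ - y₁, y₂)` is at most half the Cauchy density with location `y₁` and scale
`y₂`, whose integral in `x₁` is `1/2`, and Tonelli gives `‖g‖₁ ≤ 2 · ½ · |q|(ℍ)`.
-/

open Set Filter ProbabilityTheory
open scoped ENNReal

lemma exp_neg_le_inv {u : ℝ} (hu : 0 < u) : exp (-u) ≤ u⁻¹ := by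
  rw [exp_neg]
  exact inv_anti₀ hu (by linarith [add_one_le_exp u])

lemma rpow_neg_one_smul_exp_neg_mul {c t : ℝ} (ht : 0 < t) :
    (|(-1 : ℝ)| * t ^ ((-1 : ℝ) - 1)) • exp (-c * t ^ (-1 : ℝ)) = exp (-(c / t)) / t ^ 2 := by
  rw [show (-1 : ℝ) - 1 = -(2 : ℕ) by norm_num, rpow_neg ht.le, rpow_natCast, rpow_neg_one,
    smul_eq_mul]
  ring_nf

lemma integrableOn_exp_neg_div_div_sq {c : ℝ} (hc : 0 < c) :
    IntegrableOn (fun t => exp (-(c / t)) / t ^ 2) (Ioi 0) :=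
  ((integrableOn_Ioi_comp_rpow_iff (fun u => exp (-c * u)) (p := -1) (by norm_num)).2
    (exp_neg_integrableOn_Ioi 0 hc)).congr_fun
    (fun _ ht => rpow_neg_one_smul_exp_neg_mul ht) measurableSet_Ioi

lemma integral_exp_neg_div_div_sq {c : ℝ} (hc : 0 < c) :
    ∫ t in Ioi 0, exp (-(c / t)) / t ^ 2 = c⁻¹ := by
  have h := integral_comp_rpow_Ioi (fun u => exp (-c * u)) (p := -1) (by norm_num)
  rw [integral_exp_mul_Ioi (by linarith), mul_zero, exp_zero,
    setIntegral_congr_fun measurableSet_Ioi fun _ ht => rpow_neg_one_smul_exp_neg_mul ht] at h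
  rw [h]
  field_simp

noncomputable def besselIntegrand (n : ℕ) (b c t : ℝ) : ℝ :=
  exp (-(c / t)) * exp (-t / b) / t ^ n

noncomputable def besselIntegral (n : ℕ) (b c : ℝ) : ℝ :=
  ∫ t in Ioi 0, besselIntegrand n b c t

lemma measurable_besselIntegrand (n : ℕ) (b : ℝ) :
    Measurable fun p : ℝ × ℝ => besselIntegrand n b p.1 p.2 := by
  unfold besselIntegrand
  fun_prop

lemma aestronglyMeasurable_besselIntegrand (n : ℕ) (b c : ℝ) {μ : Measure ℝ} :
    AEStronglyMeasurable (besselIntegrand n b c) μ :=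
  ((measurable_besselIntegrand n b).comp measurable_prodMk_left).aestronglyMeasurable

lemma besselIntegrand_nonneg (n : ℕ) (b c : ℝ) {t : ℝ} (ht : 0 ≤ t) :
    0 ≤ besselIntegrand n b c t := by
  unfold besselIntegrand
  positivity

lemma besselIntegrand_le {b t : ℝ} (hb : 0 ≤ b) (ht : 0 < t) (n : ℕ) (c : ℝ) :
    besselIntegrand n b c t ≤ exp (-(c / t)) / t ^ n := by
  have : exp (-t / b) ≤ 1 := exp_le_one_iff.2 (div_nonpos_of_nonpos_of_nonneg (by linarith) hb)
  unfold besselIntegrand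
  gcongr
  exact mul_le_of_le_one_right (exp_nonneg _) this

lemma besselIntegral_nonneg (n : ℕ) (b c : ℝ) : 0 ≤ besselIntegral n b c :=
  setIntegral_nonneg measurableSet_Ioi fun _ ht => besselIntegrand_nonneg n b c (le_of_lt ht)

lemma measurable_besselIntegral (n : ℕ) (b : ℝ) : Measurable (besselIntegral n b) :=
  (measurable_besselIntegrand n b).stronglyMeasurable.integral_prod_right'.measurable

lemma integrableOn_besselIntegrand_one {b c : ℝ} (hb : 0 < b) (hc : 0 < c) :
    IntegrableOn (besselIntegrand 1 b c) (Ioi 0) := by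
  refine ((exp_neg_integrableOn_Ioi 0 (inv_pos.2 hb)).const_mul c⁻¹).mono'
    (aestronglyMeasurable_besselIntegrand 1 b c) ?_
  filter_upwards [ae_restrict_mem measurableSet_Ioi] with t (ht : 0 < t)
  have h := exp_neg_le_inv (div_pos hc ht)
  rw [Real.norm_of_nonneg (besselIntegrand_nonneg 1 b c ht.le), besselIntegrand, pow_one]
  calc exp (-(c / t)) * exp (-t / b) / t ≤ (c / t)⁻¹ * exp (-t / b) / t := by gcongr
    _ = c⁻¹ * exp (-b⁻¹ * t) := by field_simp

lemma integrableOn_besselIntegrand_two {b c : ℝ} (hb : 0 ≤ b) (hc : 0 < c) :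
    IntegrableOn (besselIntegrand 2 b c) (Ioi 0) := by
  refine (integrableOn_exp_neg_div_div_sq hc).mono'
    (aestronglyMeasurable_besselIntegrand 2 b c) ?_
  filter_upwards [ae_restrict_mem measurableSet_Ioi] with t (ht : 0 < t)
  rw [Real.norm_of_nonneg (besselIntegrand_nonneg 2 b c ht.le)]
  exact besselIntegrand_le hb ht 2 c

lemma hasDerivAt_besselIntegrand_one (b : ℝ) {t : ℝ} (ht : t ≠ 0) (c : ℝ) :
    HasDerivAt (besselIntegrand 1 b · t) (-besselIntegrand 2 b c t) c := by
  have h : HasDerivAt (fun c => exp (-(c / t)) * exp (-t / b) / t ^ 1)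
      (exp (-(c / t)) * -(1 / t) * exp (-t / b) / t ^ 1) c :=
    ((((hasDerivAt_id' c).div_const t).neg.exp).mul_const _).div_const _
  refine h.congr_deriv ?_
  unfold besselIntegrand
  field_simp

lemma hasDerivAt_besselIntegral_one {b c : ℝ} (hb : 0 < b) (hc : 0 < c) :
    HasDerivAt (besselIntegral 1 b) (-besselIntegral 2 b c) c := by
  have key := hasDerivAt_integral_of_dominated_loc_of_deriv_le
    (μ := volume.restrict (Ioi 0)) (Metric.ball_mem_nhds c (half_pos hc))
    (F := besselIntegrand 1 b) (F' := fun c t => -besselIntegrand 2 b c t)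
    (bound := fun t => exp (-(c / 2 / t)) / t ^ 2)
    (Eventually.of_forall fun _ => aestronglyMeasurable_besselIntegrand 1 b _)
    (integrableOn_besselIntegrand_one hb hc)
    (aestronglyMeasurable_besselIntegrand 2 b c).neg ?_
    (integrableOn_exp_neg_div_div_sq (half_pos hc)) ?_
  · rw [integral_neg] at key
    exact key.2
  · filter_upwards [ae_restrict_mem measurableSet_Ioi] with t (ht : 0 < t) c' hc'
    rw [Metric.mem_ball, Real.dist_eq, abs_lt] at hc'
    rw [norm_neg, Real.norm_of_nonneg (besselIntegrand_nonneg 2 b c' ht.le)]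
    refine (besselIntegrand_le hb.le ht 2 c').trans ?_
    gcongr
    linarith
  · filter_upwards [ae_restrict_mem measurableSet_Ioi] with t (ht : 0 < t) c' _
    exact hasDerivAt_besselIntegrand_one b ht.ne' c'

lemma besselIntegral_two_le {b c : ℝ} (hb : 0 ≤ b) (hc : 0 < c) : besselIntegral 2 b c ≤ c⁻¹ := by
  rw [← integral_exp_neg_div_div_sq hc]
  refine integral_mono_of_nonneg ?_ (integrableOn_exp_neg_div_div_sq hc) ?_ <;>
    filter_upwards [ae_restrict_mem measurableSet_Ioi] with t (ht : 0 < t)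
  exacts [besselIntegrand_nonneg 2 b c ht.le, besselIntegrand_le hb ht 2 c]

lemma besselG_eq (α : ℝ) (x : ℝ × ℝ) :
    besselG α x = 1 / (4 * π * α) * besselIntegral 1 (4 * π) (π * (x.1 ^ 2 + x.2 ^ 2) / α) := by
  unfold besselG besselIntegral besselIntegrand
  congr 2 with t
  ring_nf

/-- Agrees with `d2H` off the origin (`d2H_eq_d2HClosedForm`), and unlike `d2H` it is visibly
measurable. -/
noncomputable def d2HClosedForm (α : ℝ) (x : ℝ × ℝ) : ℝ :=
  x.2 / (2 * π * (x.1 ^ 2 + x.2 ^ 2))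
    - x.2 / (2 * α) * besselIntegral 2 (4 * π) (π * (x.1 ^ 2 + x.2 ^ 2) / α)

lemma hasDerivAt_Hfun {α x₁ x₂ : ℝ} (hα : 0 < α) (hs : 0 < x₁ ^ 2 + x₂ ^ 2) :
    HasDerivAt (fun y => Hfun α (x₁, y)) (d2HClosedForm α (x₁, x₂)) x₂ := by
  have hsq : HasDerivAt (fun y => x₁ ^ 2 + y ^ 2) (2 * x₂) x₂ := by
    simpa using (hasDerivAt_pow 2 x₂).const_add (x₁ ^ 2)
  have hbessel := (hasDerivAt_besselIntegral_one (b := 4 * π) (by positivity)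
    (by positivity : 0 < π * (x₁ ^ 2 + x₂ ^ 2) / α)).comp x₂
    ((hsq.const_mul π).div_const α)
  have hlog := hsq.log hs.ne'
  have hH : (fun y => Hfun α (x₁, y)) = fun y => 1 / (4 * π) *
      besselIntegral 1 (4 * π) (π * (x₁ ^ 2 + y ^ 2) / α) + 1 / (4 * π) * log (x₁ ^ 2 + y ^ 2) := by
    ext y
    rw [Hfun, besselG_eq, log_sqrt (by positivity)]
    field_simp
    ring
  rw [hH]
  refine ((hbessel.const_mul _).add (hlog.const_mul _)).congr_deriv ?_
  unfold d2HClosedForm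
  field_simp
  ring

lemma d2H_eq_d2HClosedForm {α : ℝ} (hα : 0 < α) {x : ℝ × ℝ} (hs : 0 < x.1 ^ 2 + x.2 ^ 2) :
    d2H α x = d2HClosedForm α x :=
  (hasDerivAt_Hfun hα hs).deriv

lemma measurable_d2HClosedForm (α : ℝ) : Measurable (d2HClosedForm α) := by
  unfold d2HClosedForm
  have := measurable_besselIntegral 2 (4 * π)
  fun_prop

lemma d2HClosedForm_nonneg {α : ℝ} (hα : 0 < α) (x₁ : ℝ) {x₂ : ℝ} (hx₂ : 0 < x₂) :
    0 ≤ d2HClosedForm α (x₁, x₂) := by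
  have h := besselIntegral_two_le (b := 4 * π) (by positivity)
    (by positivity : 0 < π * (x₁ ^ 2 + x₂ ^ 2) / α)
  rw [d2HClosedForm, sub_nonneg]
  calc x₂ / (2 * α) * besselIntegral 2 (4 * π) (π * (x₁ ^ 2 + x₂ ^ 2) / α)
      ≤ x₂ / (2 * α) * (π * (x₁ ^ 2 + x₂ ^ 2) / α)⁻¹ := by gcongr
    _ = x₂ / (2 * π * (x₁ ^ 2 + x₂ ^ 2)) := by field_simp

lemma d2HClosedForm_le {α : ℝ} (hα : 0 < α) (x₁ : ℝ) {x₂ : ℝ} (hx₂ : 0 ≤ x₂) :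
    d2HClosedForm α (x₁, x₂) ≤ x₂ / (2 * π * (x₁ ^ 2 + x₂ ^ 2)) := by
  rw [d2HClosedForm, sub_le_self_iff]
  exact mul_nonneg (by positivity) (besselIntegral_nonneg 2 (4 * π) _)

lemma abs_d2HClosedForm_le_cauchyPDFReal {α : ℝ} (hα : 0 < α) {y : ℝ × ℝ} (hy : 0 < y.2)
    (x : ℝ) : |d2HClosedForm α (x - y.1, y.2)| ≤ cauchyPDFReal y.1 y.2.toNNReal x / 2 := by
  rw [abs_of_nonneg (d2HClosedForm_nonneg hα _ hy), cauchyPDFReal, Real.coe_toNNReal _ hy.le]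
  refine (d2HClosedForm_le hα _ hy.le).trans_eq ?_
  field_simp

lemma lintegral_enorm_d2HClosedForm_le {α : ℝ} (hα : 0 < α) {y : ℝ × ℝ} (hy : 0 < y.2) :
    ∫⁻ x, ‖d2HClosedForm α (x - y.1, y.2)‖ₑ ≤ 2⁻¹ :=
  calc ∫⁻ x, ‖d2HClosedForm α (x - y.1, y.2)‖ₑ
      ≤ ∫⁻ x, ENNReal.ofReal (cauchyPDFReal y.1 y.2.toNNReal x / 2) :=
        lintegral_mono fun x => by
          rw [Real.enorm_eq_ofReal_abs]
          exact ENNReal.ofReal_le_ofReal (abs_d2HClosedForm_le_cauchyPDFReal hα hy x)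
    _ = ∫⁻ x, cauchyPDF y.1 y.2.toNNReal x * 2⁻¹ := by
      congr with x
      rw [cauchyPDF, ENNReal.ofReal_div_of_pos two_pos, ENNReal.ofReal_ofNat, div_eq_mul_inv]
    _ = 2⁻¹ := by
      rw [lintegral_mul_const _ (measurable_cauchyPDF _ _),
        lintegral_cauchyPDF_eq_one _ (Real.toNNReal_pos.2 hy).ne', one_mul]

lemma measurable_d2HClosedForm_sub (α : ℝ) :
    Measurable fun p : ℝ × (ℝ × ℝ) => d2HClosedForm α (p.1 - p.2.1, p.2.2) :=
  (measurable_d2HClosedForm α).comp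
    ((measurable_fst.sub measurable_snd.fst).prodMk measurable_snd.snd)

lemma enorm_integral_sub_integral_le {Y E : Type*} [MeasurableSpace Y] [NormedAddCommGroup E]
    [NormedSpace ℝ E] (μ ν : Measure Y) (f : Y → E) :
    ‖∫ y, f y ∂μ - ∫ y, f y ∂ν‖ₑ ≤ ∫⁻ y, ‖f y‖ₑ ∂(μ + ν) :=
  calc ‖∫ y, f y ∂μ - ∫ y, f y ∂ν‖ₑ ≤ ‖∫ y, f y ∂μ‖ₑ + ‖∫ y, f y ∂ν‖ₑ := enorm_sub_le
    _ ≤ ∫⁻ y, ‖f y‖ₑ ∂μ + ∫⁻ y, ‖f y‖ₑ ∂ν :=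
      add_le_add (enorm_integral_le_lintegral_enorm f) (enorm_integral_le_lintegral_enorm f)
    _ = ∫⁻ y, ‖f y‖ₑ ∂(μ + ν) := (lintegral_add_measure _ μ ν).symm

lemma lintegral_enorm_integral_sub_integral_le {X Y E : Type*} [MeasurableSpace X]
    [MeasurableSpace Y] [NormedAddCommGroup E] [NormedSpace ℝ E] {μX : Measure X} [SFinite μX]
    {μ ν : Measure Y} [SFinite μ] [SFinite ν] {Φ : X → Y → E}
    (hΦ : AEStronglyMeasurable (Function.uncurry Φ) (μX.prod (μ + ν))) {C : ℝ≥0∞}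
    (hC : ∀ᵐ y ∂(μ + ν), ∫⁻ x, ‖Φ x y‖ₑ ∂μX ≤ C) :
    ∫⁻ x, ‖∫ y, Φ x y ∂μ - ∫ y, Φ x y ∂ν‖ₑ ∂μX ≤ C * (μ + ν) univ :=
  calc ∫⁻ x, ‖∫ y, Φ x y ∂μ - ∫ y, Φ x y ∂ν‖ₑ ∂μX
      ≤ ∫⁻ x, ∫⁻ y, ‖Φ x y‖ₑ ∂(μ + ν) ∂μX :=
        lintegral_mono fun x => enorm_integral_sub_integral_le μ ν (Φ x)
    _ = ∫⁻ y, ∫⁻ x, ‖Φ x y‖ₑ ∂μX ∂(μ + ν) := lintegral_lintegral_swap hΦ.enorm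
    _ ≤ ∫⁻ _, C ∂(μ + ν) := lintegral_mono_ae hC
    _ = C * (μ + ν) univ := lintegral_const C

lemma integrable_and_integral_norm_le {X E : Type*} [MeasurableSpace X] [NormedAddCommGroup E]
    {μ : Measure X} {f : X → E} (hf : AEStronglyMeasurable f μ) {M : ℝ≥0∞} (hM : M ≠ ∞)
    (h : ∫⁻ x, ‖f x‖ₑ ∂μ ≤ M) : Integrable f μ ∧ ∫ x, ‖f x‖ ∂μ ≤ M.toReal :=
  ⟨⟨hf, h.trans_lt hM.lt_top⟩, by
    rw [integral_norm_eq_lintegral_enorm hf]; exact ENNReal.toReal_mono hM h⟩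

lemma lintegral_enorm_integral_d2HClosedForm_sub_le {α : ℝ} (hα : 0 < α)
    {μ ν : Measure (ℝ × ℝ)} [SFinite μ] [SFinite ν] (hμν : ∀ᵐ y ∂(μ + ν), 0 < y.2) :
    ∫⁻ x, ‖∫ y, d2HClosedForm α (x - y.1, y.2) ∂μ - ∫ y, d2HClosedForm α (x - y.1, y.2) ∂ν‖ₑ
      ≤ 2⁻¹ * (μ + ν) univ :=
  lintegral_enorm_integral_sub_integral_le (measurable_d2HClosedForm_sub α).aestronglyMeasurable
    (hμν.mono fun _ hy => lintegral_enorm_d2HClosedForm_le hα hy)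

/-- if `q` is a bounded Radon measure (a finite signed measure)
on the half-plane `ℍ = {x₂ > 0}` and
`g(x₁) = -2 ∫_ℍ ∂₂Hα(x₁ - y₁, y₂) dq(y)`, then `g ∈ L¹(ℝ)` with
`‖g‖_{L¹} ≤ ‖q‖_{BM(ℍ)}`. -/
theorem stmt_14 (α : ℝ) (hα : 0 < α) (q : MeasureTheory.SignedMeasure (ℝ × ℝ))
    (hsupp : q.totalVariation {x : ℝ × ℝ | ¬ 0 < x.2} = 0)
    (g : ℝ → ℝ)
    (hg : ∀ x₁ : ℝ, g x₁ =
      -2 * ((∫ y : ℝ × ℝ, d2H α (x₁ - y.1, y.2) ∂q.toJordanDecomposition.posPart)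
        - ∫ y : ℝ × ℝ, d2H α (x₁ - y.1, y.2) ∂q.toJordanDecomposition.negPart)) :
    MeasureTheory.Integrable g ∧
      (∫ x₁ : ℝ, |g x₁|) ≤ (q.totalVariation Set.univ).toReal := by
  set μ := q.toJordanDecomposition.posPart
  set ν := q.toJordanDecomposition.negPart
  have htv : q.totalVariation = μ + ν := rfl
  have hhalf : ∀ᵐ y ∂(μ + ν), 0 < y.2 := by rw [← htv]; exact ae_iff.2 hsupp
  set Φ : ℝ → ℝ × ℝ → ℝ := fun x y => d2HClosedForm α (x - y.1, y.2)
  have hgΦ : g = fun x => -2 * (∫ y, Φ x y ∂μ - ∫ y, Φ x y ∂ν) := by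
    ext x
    have hx : (fun y : ℝ × ℝ => d2H α (x - y.1, y.2)) =ᵐ[μ + ν] Φ x :=
      hhalf.mono fun y hy => d2H_eq_d2HClosedForm hα (by positivity)
    rw [hg, integral_congr_ae (ae_add_measure_iff.1 hx).1,
      integral_congr_ae (ae_add_measure_iff.1 hx).2]
  have hbound : ∫⁻ x, ‖g x‖ₑ ≤ q.totalVariation univ :=
    calc ∫⁻ x, ‖g x‖ₑ = 2 * ∫⁻ x, ‖∫ y, Φ x y ∂μ - ∫ y, Φ x y ∂ν‖ₑ := by
          rw [hgΦ, ← lintegral_const_mul' _ _ ENNReal.ofNat_ne_top]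
          congr with x
          rw [enorm_mul, enorm_neg, Real.enorm_of_nonneg zero_le_two, ENNReal.ofReal_ofNat]
      _ ≤ 2 * (2⁻¹ * (μ + ν) univ) := by
          gcongr
          exact lintegral_enorm_integral_d2HClosedForm_sub_le hα hhalf
      _ = q.totalVariation univ := by
          rw [← mul_assoc, ENNReal.mul_inv_cancel two_ne_zero ENNReal.ofNat_ne_top, one_mul, htv]
  have hgm : AEStronglyMeasurable g := by
    have hΦ := (measurable_d2HClosedForm_sub α).stronglyMeasurable
    rw [hgΦ]
    exact ((hΦ.integral_prod_right'.sub hΦ.integral_prod_right').const_mul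
      (-2)).aestronglyMeasurable
  simpa only [Real.norm_eq_abs] using
    integrable_and_integral_norm_le hgm (measure_ne_top _ _) hbound
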